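/- For the objective β·tr((BH)T_β(BH)ᵀ) + β·tr(H(I−T_β)Hᵀ) with BᵀB = I − A, the gradient descent step with stepsize η = 1/(2β) starting from H^(k−1) yields H^(k) = A H^(k−1) T_β. Consequently, K such steps starting from X yield A^K X (T_β^(1) ⋯ T_β^(K)). -/

import Mathlib

open Matrix

/-!
Since `BᵀB = I − A`, one gradient step with stepsize `1/(2β)` is
`H − ((I − A) H T + H (I − T)) = A H T`, as the `H T` and `H` terms cancel.
Unrolling this linear recursion gives the closed form by induction on `K`.
-/

namespace Matrix

variable {R : Type*} [Ring R] {n d : Type*} [Fintype n] [DecidableEq n] [Fintype d]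
  [DecidableEq d]

theorem sub_one_sub_mul_mul_add_mul_one_sub (A : Matrix n n R) (H : Matrix n d R)
    (T : Matrix d d R) : H - ((1 - A) * H * T + H * (1 - T)) = A * H * T := by
  simp only [Matrix.sub_mul, Matrix.mul_sub, Matrix.one_mul, Matrix.mul_one]
  abel

theorem eq_pow_mul_mul_prod_of_succ_eq {A : Matrix n n R} {T : ℕ → Matrix d d R}
    {H : ℕ → Matrix n d R} (hH : ∀ k, H (k + 1) = A * H k * T (k + 1)) (K : ℕ) :
    H K = A ^ K * H 0 * ((List.range K).map (fun k => T (k + 1))).prod := by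
  induction K with
  | zero => simp
  | succ k ih =>
    rw [hH k, ih]
    simp only [pow_succ', List.range_succ, List.map_append, List.prod_append, List.map_cons,
      List.map_nil, List.prod_cons, List.prod_nil, mul_one, Matrix.mul_assoc]

end Matrix

theorem sgc_unrolled_gd_general {n m d : ℕ} (β : ℝ) (hβ : 0 < β) (K : ℕ)
    (X : Matrix (Fin n) (Fin d) ℝ) (A : Matrix (Fin n) (Fin n) ℝ)
    (B : Matrix (Fin m) (Fin n) ℝ) (hB : Bᵀ * B = 1 - A)
    (T : ℕ → Matrix (Fin d) (Fin d) ℝ)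
    (H : ℕ → Matrix (Fin n) (Fin d) ℝ) (hH0 : H 0 = X)
    (hHstep : ∀ k,
      H (k + 1) = H k - (1 / (2 * β)) •
        ((2 * β) • (Bᵀ * B * H k * T (k + 1))
          + (2 * β) • (H k * (1 - T (k + 1))))) :
    (∀ k, H (k + 1) = A * H k * T (k + 1)) ∧
      H K = A ^ K * X * ((List.range K).map (fun k => T (k + 1))).prod := by
  have hstep (k : ℕ) : H (k + 1) = A * H k * T (k + 1) := by
    rw [hHstep k, ← smul_add, smul_smul, one_div, inv_mul_cancel₀ (by positivity), one_smul, hB,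
      sub_one_sub_mul_mul_add_mul_one_sub]
  exact ⟨hstep, hH0 ▸ eq_pow_mul_mul_prod_of_succ_eq hstep K⟩

/-- For the SGC-type objective `β·tr((BH)Tβ(BH)ᵀ) + β·tr(H(I−Tβ)Hᵀ)` with
`BᵀB = I − A`, whose gradient is `2β BᵀB H Tβ + 2β H(I − Tβ)`, the gradient
descent step with stepsize `η = 1/(2β)` yields `H⁽ᵏ⁾ = A H⁽ᵏ⁻¹⁾ Tβ⁽ᵏ⁾`, and
consequently `K` such steps starting from `X` give `A^K X (Tβ⁽¹⁾ ⋯ Tβ⁽ᴷ⁾)`. -/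
theorem sgc_unrolled_gd {n m d : ℕ} (β : ℝ) (hβ : 0 < β) (K : ℕ)
    (X : Matrix (Fin n) (Fin d) ℝ) (A : Matrix (Fin n) (Fin n) ℝ)
    (B : Matrix (Fin m) (Fin n) ℝ) (hB : Bᵀ * B = 1 - A)
    (T : ℕ → Matrix (Fin d) (Fin d) ℝ) (hT : ∀ k, (T k).IsSymm)
    (H : ℕ → Matrix (Fin n) (Fin d) ℝ) (hH0 : H 0 = X)
    (hHstep : ∀ k,
      H (k + 1) = H k - (1 / (2 * β)) •
        ((2 * β) • (Bᵀ * B * H k * T (k + 1))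
          + (2 * β) • (H k * (1 - T (k + 1))))) :
    (∀ k, H (k + 1) = A * H k * T (k + 1)) ∧
      H K = A ^ K * X * ((List.range K).map (fun k => T (k + 1))).prod :=
  sgc_unrolled_gd_general β hβ K X A B hB T H hH0 hHstep
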